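/- Under the hypotheses of Theorem 1 with k = 1, p_1 = p prime, m_1 = m ≥ 2, and λ = p: the p^2 codes C_{s,t} (s,t ∈ Z_p), each a p × p^m matrix with rows ψ(a_{s,t}^γ) for γ ∈ Z_p, form a (p^2, p^{m−1})-ZCCS with p sequences per code of length p^m; in particular Σ_{γ∈Z_p} C(ψ(a_{s_1,t}^γ), ψ(a_{s_2,t}^γ))(τ) = 0 for s_1 ≠ s_2 and all |τ| < p^{m−1}. -/

import Mathlib

open Finset

/-- Aperiodic cross-correlation function (ACCF) of two length-`L` complex sequences. -/
noncomputable def accf (L : ℕ) (a b : ℕ → ℂ) (τ : ℤ) : ℂ :=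
  if 0 ≤ τ ∧ τ < (L : ℤ) then
    ∑ i ∈ range (L - τ.toNat), a i * (starRingEnd ℂ) (b (i + τ.toNat))
  else if -(L : ℤ) < τ ∧ τ ≤ -1 then
    ∑ i ∈ range (L - (-τ).toNat), a (i + (-τ).toNat) * (starRingEnd ℂ) (b i)
  else 0

/-- The `β`-th base-`p` digit of the inner coordinate `j % p^(m-1)` of `j < p^m`. -/
def pdig (p m j β : ℕ) : ℕ := j % p ^ (m - 1) / p ^ β % p

/-- The function `a_{s,t}^γ` of Theorem 1 specialized to `k = 1`, `λ = p`:
`a_{s,t}^γ = Σ_{β} v_{π(β)}v_{π(β+1)} + Σ_β c_β v_β + c + v_{π(1)}γ + v_{π(m−1)}t + v's`,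
as a `ZMod p`-valued function of the index `j < p^m` (outer coordinate `v' = j / p^(m-1)`). -/
def aP (p m : ℕ) (π : ℕ → ℕ) (c : ℕ → ZMod p) (c0 : ZMod p)
    (s t γ : Fin p) (j : ℕ) : ZMod p :=
  (∑ β ∈ range (m - 2), (pdig p m j (π β) : ZMod p) * (pdig p m j (π (β + 1)) : ZMod p))
    + ∑ β ∈ range (m - 1), c β * (pdig p m j β : ZMod p) + c0
    + (pdig p m j (π 0) : ZMod p) * ((γ : ℕ) : ZMod p)
    + (pdig p m j (π (m - 2)) : ZMod p) * ((t : ℕ) : ZMod p)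
    + ((j / p ^ (m - 1) : ℕ) : ZMod p) * ((s : ℕ) : ZMod p)

/-- The complex sequence `ω_p^{g(·)}`. -/
noncomputable def seqP (p : ℕ) (g : ℕ → ZMod p) : ℕ → ℂ :=
  fun j => Complex.exp (2 * Real.pi * Complex.I * ((g j).val : ℂ) / (p : ℂ))


/-- plain base-`p` digit -/
def dg (p i β : ℕ) : ℕ := i / p ^ β % p

/-- replace digit `κ` of `i` by `d` -/
def sg (p κ d i : ℕ) : ℕ := (i / p ^ (κ+1)) * p^(κ+1) + d * p^κ + i % p^κ

variable {p : ℕ}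

lemma dg_lt (hp : 0 < p) (i β : ℕ) : dg p i β < p := Nat.mod_lt _ hp

lemma div_pow_split (hp : 0 < p) {q n : ℕ} (h : q ≤ n) (i : ℕ) :
    i / p ^ q = (i / p ^ n) * p ^ (n - q) + (i % p ^ n) / p ^ q := by
  have h1 : i = (i % p ^ n) + ((i / p ^ n) * p ^ (n - q)) * p ^ q := by
    rw [mul_assoc, ← pow_add]
    have hq : n - q + q = n := by omega
    rw [hq]
    exact (Nat.mod_add_div' i (p ^ n)).symm
  conv_lhs => rw [h1]
  rw [Nat.add_mul_div_right _ _ (Nat.pow_pos (n := q) hp)]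
  omega

lemma dg_mod_pow (hp : 0 < p) {q n : ℕ} (h : q < n) (i : ℕ) :
    dg p (i % p ^ n) q = dg p i q := by
  unfold dg
  rw [div_pow_split hp (le_of_lt h) i]
  have h4 : n - q = (n - q - 1) + 1 := by omega
  rw [h4, pow_succ, ← mul_assoc, Nat.add_comm, Nat.add_mul_mod_self_right]

lemma sg_self (hp : 0 < p) (κ i : ℕ) : sg p κ (dg p i κ) i = i := by
  unfold sg dg
  have h2 : i / p ^ κ / p = i / p ^ (κ+1) := by
    rw [Nat.div_div_eq_div_mul, ← pow_succ]
  have h1 : i / p ^ κ = (i / p ^ (κ+1)) * p + (i / p ^ κ) % p := by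
    rw [← h2]; exact (Nat.div_add_mod' _ p).symm
  have h3 : i = (i / p ^ κ) * p ^ κ + i % p ^ κ := (Nat.div_add_mod' i (p ^ κ)).symm
  conv_rhs => rw [h3, h1]
  ring

lemma sg_shift (κ d i : ℕ) : sg p κ d i = sg p κ 0 i + d * p ^ κ := by
  unfold sg; ring

lemma sg_add (hp : 0 < p) (κ d i : ℕ) :
    sg p κ d i + dg p i κ * p ^ κ = i + d * p ^ κ := by
  conv_rhs => rw [← sg_self hp κ i]
  rw [sg_shift, sg_shift (d := dg p i κ)]
  ring

lemma sg_div (hp : 0 < p) {d : ℕ} (hd : d < p) (κ i : ℕ) :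
    sg p κ d i / p ^ (κ+1) = i / p ^ (κ+1) := by
  unfold sg
  have hlo : d * p ^ κ + i % p ^ κ < p ^ (κ+1) := by
    have h1 : i % p ^ κ < p ^ κ := Nat.mod_lt _ (Nat.pow_pos (n := κ) hp)
    have h2 : (d + 1) * p ^ κ ≤ p * p ^ κ := Nat.mul_le_mul_right _ (by omega)
    rw [pow_succ]
    nlinarith
  rw [add_assoc, Nat.add_comm, Nat.add_mul_div_right _ _ (Nat.pow_pos (n := _) hp),
    Nat.div_eq_of_lt hlo, zero_add]

lemma sg_mod (hp : 0 < p) (κ d i : ℕ) : sg p κ d i % p ^ κ = i % p ^ κ := by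
  unfold sg
  have h2 : (i / p ^ (κ+1)) * p^(κ+1) + d * p^κ + i % p^κ
      = ((i / p ^ (κ+1)) * p + d) * p ^ κ + i % p ^ κ := by
    rw [pow_succ]; ring
  rw [h2, Nat.add_comm, Nat.add_mul_mod_self_right, Nat.mod_mod_of_dvd i dvd_rfl]

lemma dg_sg_self (hp : 0 < p) {d : ℕ} (hd : d < p) (κ i : ℕ) :
    dg p (sg p κ d i) κ = d := by
  unfold dg sg
  have hlo : i % p ^ κ < p ^ κ := Nat.mod_lt _ (Nat.pow_pos (n := κ) hp)
  have h1 : i / p ^ (κ+1) * p ^ (κ+1) + d * p ^ κ + i % p ^ κ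
      = (i % p ^ κ) + (i / p ^ (κ+1) * p + d) * p ^ κ := by rw [pow_succ]; ring
  rw [h1, Nat.add_mul_div_right _ _ (Nat.pow_pos (n := κ) hp),
    Nat.div_eq_of_lt hlo, zero_add, Nat.add_comm, Nat.add_mul_mod_self_right,
    Nat.mod_eq_of_lt hd]

lemma dg_sg_ne (hp : 0 < p) {d : ℕ} (hd : d < p) {κ q : ℕ} (hq : q ≠ κ) (i : ℕ) :
    dg p (sg p κ d i) q = dg p i q := by
  rcases Nat.lt_or_ge q κ with h | h
  · rw [← dg_mod_pow hp h (sg p κ d i), sg_mod hp, dg_mod_pow hp h]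
  · have hq' : κ + 1 ≤ q := by omega
    unfold dg
    have h1 : sg p κ d i / p ^ q = sg p κ d i / p ^ (κ+1) / p ^ (q - (κ+1)) := by
      rw [Nat.div_div_eq_div_mul, ← pow_add]
      congr 2
      omega
    have h2 : i / p ^ q = i / p ^ (κ+1) / p ^ (q - (κ+1)) := by
      rw [Nat.div_div_eq_div_mul, ← pow_add]
      congr 2
      omega
    rw [h1, h2, sg_div hp hd]

lemma sg_div_ge (hp : 0 < p) {d : ℕ} (hd : d < p) {κ M : ℕ} (hM : κ + 1 ≤ M) (i : ℕ) :
    sg p κ d i / p ^ M = i / p ^ M := by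
  have h1 : ∀ x : ℕ, x / p ^ M = x / p ^ (κ+1) / p ^ (M - (κ+1)) := by
    intro x
    rw [Nat.div_div_eq_div_mul, ← pow_add]
    congr 2
    omega
  rw [h1, h1 i, sg_div hp hd]

lemma sg_lt (hp : 0 < p) {d : ℕ} (hd : d < p) {κ M : ℕ} (hκ : κ < M) {i : ℕ}
    (hi : i < p ^ M) : sg p κ d i < p ^ M := by
  have h1 : sg p κ d i / p ^ M = i / p ^ M := sg_div_ge hp hd (by omega) i
  have h2 : i / p ^ M = 0 := Nat.div_eq_of_lt hi
  have h3 : sg p κ d i / p ^ M = 0 := by rw [h1, h2]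
  by_contra hcon
  push_neg at hcon
  have := Nat.div_le_div_right (c := p ^ M) hcon
  rw [Nat.div_self (Nat.pow_pos (n := M) hp), h3] at this
  omega

lemma dg_ext (hp : 0 < p) : ∀ n : ℕ, ∀ i j : ℕ, i < p ^ n → j < p ^ n →
    (∀ q < n, dg p i q = dg p j q) → i = j := by
  intro n
  induction n with
  | zero => intro i j hi hj _; simp at hi hj; omega
  | succ n ih =>
    intro i j hi hj hq
    have h0 : i % p = j % p := by
      have := hq 0 (by omega)
      unfold dg at this
      simpa using this
    have hdiv : i / p = j / p := by
      refine ih (i / p) (j / p) ?_ ?_ ?_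
      · rw [Nat.div_lt_iff_lt_mul hp, ← pow_succ]; exact hi
      · rw [Nat.div_lt_iff_lt_mul hp, ← pow_succ]; exact hj
      · intro q hqn
        have := hq (q + 1) (by omega)
        unfold dg at this ⊢
        rw [Nat.div_div_eq_div_mul, Nat.div_div_eq_div_mul]
        rwa [pow_succ'] at this
    rw [← Nat.div_add_mod i p, ← Nat.div_add_mod j p, hdiv, h0]

noncomputable def zt (p : ℕ) : ℂ := Complex.exp (2 * Real.pi * Complex.I / p)

noncomputable def ch (p : ℕ) (x : ZMod p) : ℂ := zt p ^ x.val

lemma zt_pow_p (hp : p.Prime) : zt p ^ p = 1 :=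
  (Complex.isPrimitiveRoot_exp p hp.ne_zero).pow_eq_one

lemma zt_pow_mod (hp : p.Prime) (a : ℕ) : zt p ^ (a % p) = zt p ^ a := by
  conv_rhs => rw [← Nat.div_add_mod a p, pow_add, pow_mul, zt_pow_p hp, one_pow, one_mul]

lemma ch_natCast (hp : p.Prime) (a : ℕ) : ch p (a : ZMod p) = zt p ^ a := by
  unfold ch; rw [ZMod.val_natCast, zt_pow_mod hp]

lemma ch_add (hp : p.Prime) (x y : ZMod p) : ch p (x + y) = ch p x * ch p y := by
  haveI : NeZero p := ⟨hp.ne_zero⟩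
  rw [← ZMod.natCast_rightInverse x, ← ZMod.natCast_rightInverse y, ← Nat.cast_add,
    ch_natCast hp, ch_natCast hp, ch_natCast hp, pow_add]

lemma ch_zero (hp : p.Prime) : ch p 0 = 1 := by
  haveI : NeZero p := ⟨hp.ne_zero⟩
  unfold ch
  rw [ZMod.val_zero, pow_zero]

lemma ch_mul_neg (hp : p.Prime) (x : ZMod p) : ch p x * ch p (-x) = 1 := by
  rw [← ch_add hp, add_neg_cancel, ch_zero hp]

lemma conj_ch (hp : p.Prime) (x : ZMod p) :
    (starRingEnd ℂ) (ch p x) = ch p (-x) := by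
  have hz : zt p = Complex.exp (((2 * Real.pi / p : ℝ) : ℂ) * Complex.I) := by
    unfold zt; congr 1; push_cast; ring
  have hconj : (starRingEnd ℂ) (zt p) = (zt p)⁻¹ := by
    rw [hz, ← Complex.exp_conj, ← Complex.exp_neg]
    congr 1
    rw [map_mul, Complex.conj_ofReal, Complex.conj_I]
    ring
  have h1 : (starRingEnd ℂ) (ch p x) = (ch p x)⁻¹ := by
    unfold ch
    rw [map_pow, hconj, inv_pow]
  rw [h1]
  have h2 := ch_mul_neg hp x
  exact inv_eq_of_mul_eq_one_left (by rw [mul_comm]; exact h2)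

lemma sum_range_zmod (hp : p.Prime) [NeZero p] (f : ZMod p → ℂ) :
    ∑ d ∈ range p, f (d : ZMod p) = ∑ x : ZMod p, f x := by
  haveI : NeZero p := ⟨hp.ne_zero⟩
  refine Finset.sum_bij' (i := fun d _ => (d : ZMod p)) (j := fun x _ => x.val)
    (fun a ha => mem_univ _) (fun x _ => mem_range.mpr (ZMod.val_lt x))
    (fun a ha => ZMod.val_natCast_of_lt (mem_range.mp ha))
    (fun x _ => ZMod.natCast_rightInverse x) (fun a ha => rfl)

lemma sum_ch (hp : p.Prime) [NeZero p] : ∑ x : ZMod p, ch p x = 0 := by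
  rw [← sum_range_zmod hp]
  have h1 : ∀ d ∈ range p, ch p ((d : ℕ) : ZMod p) = zt p ^ d := fun d _ => ch_natCast hp d
  rw [Finset.sum_congr rfl h1]
  exact (Complex.isPrimitiveRoot_exp p hp.ne_zero).geom_sum_eq_zero hp.one_lt

lemma sum_ch_affine (hp : p.Prime) [NeZero p] {E : ZMod p} (hE : E ≠ 0) (C : ZMod p) :
    ∑ x : ZMod p, ch p (x * E + C) = 0 := by
  haveI : Fact p.Prime := ⟨hp⟩
  have hbij : Function.Bijective (fun x : ZMod p => x * E + C) := by
    constructor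
    · intro a b hab
      simp only [add_left_inj] at hab
      exact mul_right_cancel₀ hE hab
    · intro y
      exact ⟨(y - C) * E⁻¹, by field_simp; ring⟩
  rw [Fintype.sum_bijective _ hbij _ (fun y => ch p y) (fun x => rfl)]
  exact sum_ch hp

lemma sg_zero_sg (hp : 0 < p) {d : ℕ} (hd : d < p) (κ i : ℕ) :
    sg p κ 0 (sg p κ d i) = sg p κ 0 i := by
  conv_lhs => rw [show sg p κ 0 (sg p κ d i)
    = (sg p κ d i / p^(κ+1))*p^(κ+1) + 0*p^κ + sg p κ d i % p^κ from rfl]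
  rw [sg_div hp hd, sg_mod hp]
  rfl

lemma core (hp : p.Prime) (T : Finset ℕ) (k : ℕ → ℕ) (F E : ℕ → ZMod p)
    (hmem : ∀ i ∈ T, ∀ d < p, sg p (k i) d i ∈ T)
    (hk : ∀ i ∈ T, ∀ d < p, k (sg p (k i) d i) = k i)
    (hF : ∀ i ∈ T, ∀ d < p,
      F (sg p (k i) d i) = F i + (((d : ZMod p) - (dg p i (k i) : ZMod p)) * E i))
    (hE : ∀ i ∈ T, E i ≠ 0) :
    ∑ i ∈ T, ch p (F i) = 0 := by
  haveI : NeZero p := ⟨hp.ne_zero⟩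
  have hppos : 0 < p := hp.pos
  have hPpos : ∀ κ : ℕ, 0 < p ^ κ := fun κ => Nat.pow_pos (n := κ) hppos
  set g : ℕ → ℕ × ℕ := fun i => (sg p (k i) 0 i, k i) with hg
  rw [← Finset.sum_fiberwise_of_maps_to
    (g := g) (t := T.image g) (fun i hi => Finset.mem_image_of_mem g hi)]
  apply Finset.sum_eq_zero
  intro y hy
  obtain ⟨i₀, hi₀, hgi₀⟩ := Finset.mem_image.mp hy
  have hy1 : y.1 = sg p (k i₀) 0 i₀ := by rw [← hgi₀]
  have hy2 : y.2 = k i₀ := by rw [← hgi₀]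
  have hfiber : T.filter (fun i => g i = y)
      = (range p).image (fun d => sg p (k i₀) d i₀) := by
    apply Finset.ext
    intro i
    simp only [Finset.mem_filter, Finset.mem_image, Finset.mem_range]
    constructor
    · rintro ⟨hiT, hgi⟩
      have hki : k i = k i₀ := by
        have h := congrArg Prod.snd hgi; simpa [hg, hy2] using h
      have hsgi : sg p (k i₀) 0 i = sg p (k i₀) 0 i₀ := by
        have h := congrArg Prod.fst hgi; rw [hg] at h; simp at h
        rw [hki] at h
        rw [h, hy1]
      refine ⟨dg p i (k i₀), dg_lt hppos i _, ?_⟩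
      have h1 : sg p (k i₀) (dg p i (k i₀)) i₀
          = sg p (k i₀) 0 i₀ + dg p i (k i₀) * p ^ (k i₀) := sg_shift _ _ _
      have h2 : i = sg p (k i₀) 0 i + dg p i (k i₀) * p ^ (k i₀) := by
        conv_lhs => rw [← sg_self hppos (k i₀) i]
        exact sg_shift _ _ _
      rw [h1, ← hsgi, ← h2]
    · rintro ⟨d, hd, hdi⟩
      subst hdi
      refine ⟨hmem i₀ hi₀ d hd, ?_⟩
      have hks : k (sg p (k i₀) d i₀) = k i₀ := hk i₀ hi₀ d hd
      have : g (sg p (k i₀) d i₀)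
          = (sg p (k i₀) 0 (sg p (k i₀) d i₀), k i₀) := by rw [hg]; simp [hks]
      rw [this, sg_zero_sg hppos hd]
      apply Prod.ext <;> simp [hy1, hy2]
  rw [hfiber, Finset.sum_image ?hinj]
  case hinj =>
    intro d hd d' hd' hdd
    have h1 : sg p (k i₀) 0 i₀ + d * p ^ (k i₀)
        = sg p (k i₀) 0 i₀ + d' * p ^ (k i₀) := by
      rw [← sg_shift, ← sg_shift]; exact hdd
    have h2 : d * p ^ (k i₀) = d' * p ^ (k i₀) := by omega
    exact Nat.eq_of_mul_eq_mul_right (hPpos _) h2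
  have hsum : ∀ d ∈ range p, ch p (F (sg p (k i₀) d i₀))
      = ch p ((d : ZMod p) * E i₀ + (F i₀ - (dg p i₀ (k i₀) : ZMod p) * E i₀)) := by
    intro d hd
    rw [hF i₀ hi₀ d (mem_range.mp hd)]
    congr 1
    ring
  rw [Finset.sum_congr rfl hsum,
    sum_range_zmod hp (fun x => ch p (x * E i₀ + (F i₀ - (dg p i₀ (k i₀) : ZMod p) * E i₀)))]
  exact sum_ch_affine hp (hE i₀ hi₀) _

/-- quadratic part -/
def Qf (p m : ℕ) (π : ℕ → ℕ) (j : ℕ) : ZMod p :=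
  ∑ β ∈ Finset.range (m-2), (dg p j (π β) : ZMod p) * (dg p j (π (β+1)) : ZMod p)

/-- linear part -/
def Lcf (p m : ℕ) (c : ℕ → ZMod p) (j : ℕ) : ZMod p :=
  ∑ β ∈ Finset.range (m-1), c β * (dg p j β : ZMod p)

/-- γ-free part of `aP` -/
def Bf (p m : ℕ) (π : ℕ → ℕ) (c : ℕ → ZMod p) (c0 : ZMod p) (s t : Fin p) (j : ℕ) : ZMod p :=
  Qf p m π j + Lcf p m c j + c0 + (dg p j (π (m-2)) : ZMod p) * ((t : ℕ) : ZMod p)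
    + ((j / p ^ (m-1) : ℕ) : ZMod p) * ((s : ℕ) : ZMod p)

lemma aP_eq {m : ℕ} {π : ℕ → ℕ} {c : ℕ → ZMod p} {c0 : ZMod p}
    (hp : 0 < p) (hm : 2 ≤ m)
    (hmaps : Set.MapsTo π (Set.Iio (m-1)) (Set.Iio (m-1)))
    (s t γ : Fin p) (j : ℕ) :
    aP p m π c c0 s t γ j
      = Bf p m π c c0 s t j + (dg p j (π 0) : ZMod p) * ((γ : ℕ) : ZMod p) := by
  have hpd : ∀ β, β < m - 1 → pdig p m j β = dg p j β := fun β hβ => dg_mod_pow hp hβ j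
  have hmm : ∀ β, β < m - 1 → π β < m - 1 := fun β hβ =>
    Set.mem_Iio.mp (hmaps (Set.mem_Iio.mpr hβ))
  have hq : ∑ β ∈ Finset.range (m-2), (pdig p m j (π β) : ZMod p) * (pdig p m j (π (β+1)) : ZMod p)
      = ∑ β ∈ Finset.range (m-2), (dg p j (π β) : ZMod p) * (dg p j (π (β+1)) : ZMod p) :=
    Finset.sum_congr rfl (fun β hβ => by
      have hβ' := Finset.mem_range.mp hβ
      rw [hpd (π β) (hmm β (by omega)), hpd (π (β+1)) (hmm (β+1) (by omega))])
  have hl : ∑ β ∈ Finset.range (m-1), c β * (pdig p m j β : ZMod p)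
      = ∑ β ∈ Finset.range (m-1), c β * (dg p j β : ZMod p) :=
    Finset.sum_congr rfl (fun β hβ => by rw [hpd β (Finset.mem_range.mp hβ)])
  unfold aP Bf Qf Lcf
  rw [hq, hl, hpd (π 0) (hmm 0 (by omega)), hpd (π (m-2)) (hmm (m-2) (by omega))]
  ring

lemma Qf_sg {m : ℕ} {π : ℕ → ℕ} (hp : 0 < p)
    (hinj : Set.InjOn π (Set.Iio (m-1))) {b₀ d : ℕ}
    (hb : b₀ + 1 < m - 1) (hd : d < p) (j : ℕ) :
    Qf p m π (sg p (π b₀) d j) = Qf p m π j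
      + ((d : ZMod p) - (dg p j (π b₀) : ZMod p))
        * ((dg p j (π (b₀+1)) : ZMod p)
           + (if b₀ = 0 then (0 : ZMod p) else (dg p j (π (b₀-1)) : ZMod p))) := by
  have hne : ∀ β, β < m - 1 → β ≠ b₀ → π β ≠ π b₀ := fun β hβ hne' heq =>
    hne' (hinj (Set.mem_Iio.mpr hβ) (Set.mem_Iio.mpr (by omega)) heq)
  have hgoal : Qf p m π (sg p (π b₀) d j) - Qf p m π j
      = ((d : ZMod p) - (dg p j (π b₀) : ZMod p))
        * ((dg p j (π (b₀+1)) : ZMod p)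
           + (if b₀ = 0 then (0 : ZMod p) else (dg p j (π (b₀-1)) : ZMod p))) := by
    unfold Qf
    rw [← Finset.sum_sub_distrib]
    by_cases h0 : b₀ = 0
    · subst h0
      rw [Finset.sum_eq_single_of_mem 0 (Finset.mem_range.mpr (by omega)) ?hz]
      case hz =>
        intro β hβ hβ0
        simp only [Finset.mem_range] at hβ
        rw [dg_sg_ne hp hd (hne β (by omega) hβ0),
          dg_sg_ne hp hd (hne (β+1) (by omega) (by omega)), sub_self]
      rw [dg_sg_self hp hd, dg_sg_ne hp hd (hne 1 (by omega) (by omega))]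
      rw [if_pos rfl]
      ring
    · have hsub : ({b₀ - 1, b₀} : Finset ℕ) ⊆ Finset.range (m-2) := by
        intro x hx
        simp only [Finset.mem_insert, Finset.mem_singleton] at hx
        rcases hx with h | h <;> (subst h; exact Finset.mem_range.mpr (by omega))
      rw [← Finset.sum_subset hsub ?hz]
      case hz =>
        intro β hβ hβn
        simp only [Finset.mem_range] at hβ
        simp only [Finset.mem_insert, Finset.mem_singleton] at hβn
        push_neg at hβn
        rw [dg_sg_ne hp hd (hne β (by omega) hβn.2),
          dg_sg_ne hp hd (hne (β+1) (by omega) (by omega)), sub_self]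
      rw [Finset.sum_pair (by omega : b₀ - 1 ≠ b₀)]
      have hb1 : b₀ - 1 + 1 = b₀ := by omega
      rw [hb1, dg_sg_self hp hd, dg_sg_ne hp hd (hne (b₀-1) (by omega) (by omega)),
        dg_sg_ne hp hd (hne (b₀+1) (by omega) (by omega))]
      rw [if_neg h0]
      ring
  have := hgoal
  linear_combination this

lemma Lcf_sg {m : ℕ} {c : ℕ → ZMod p} (hp : 0 < p) {κ d : ℕ}
    (hκ : κ < m - 1) (hd : d < p) (j : ℕ) :
    Lcf p m c (sg p κ d j) = Lcf p m c j
      + c κ * ((d : ZMod p) - (dg p j κ : ZMod p)) := by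
  have hgoal : Lcf p m c (sg p κ d j) - Lcf p m c j
      = c κ * ((d : ZMod p) - (dg p j κ : ZMod p)) := by
    unfold Lcf
    rw [← Finset.sum_sub_distrib]
    rw [Finset.sum_eq_single_of_mem κ (Finset.mem_range.mpr hκ) ?hz]
    case hz =>
      intro β hβ hβκ
      rw [dg_sg_ne hp hd hβκ, sub_self]
    rw [dg_sg_self hp hd]
    ring
  linear_combination hgoal

lemma Bf_sg {m : ℕ} {π : ℕ → ℕ} {c : ℕ → ZMod p} {c0 : ZMod p} (hp : 0 < p)
    (hm : 2 ≤ m) (hinj : Set.InjOn π (Set.Iio (m-1)))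
    (hmaps : Set.MapsTo π (Set.Iio (m-1)) (Set.Iio (m-1)))
    {b₀ d : ℕ} (hb : b₀ + 1 < m - 1) (hd : d < p) (s t' : Fin p) (j : ℕ) :
    Bf p m π c c0 s t' (sg p (π b₀) d j) = Bf p m π c c0 s t' j
      + ((d : ZMod p) - (dg p j (π b₀) : ZMod p))
        * ((dg p j (π (b₀+1)) : ZMod p)
           + (if b₀ = 0 then (0:ZMod p) else (dg p j (π (b₀-1)) : ZMod p)))
      + c (π b₀) * ((d : ZMod p) - (dg p j (π b₀) : ZMod p)) := by
  have hκ : π b₀ < m - 1 := Set.mem_Iio.mp (hmaps (Set.mem_Iio.mpr (by omega)))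
  have h1 : dg p (sg p (π b₀) d j) (π (m-2)) = dg p j (π (m-2)) := by
    apply dg_sg_ne hp hd
    intro heq
    have := hinj (Set.mem_Iio.mpr (by omega : m - 2 < m - 1)) (Set.mem_Iio.mpr (by omega)) heq
    omega
  have h2 : sg p (π b₀) d j / p ^ (m-1) = j / p ^ (m-1) := sg_div_ge hp hd (by omega) j
  unfold Bf
  rw [Qf_sg hp hinj hb hd, Lcf_sg hp hκ hd, h1, h2]
  ring

/-- index of first differing permuted digit between `i` and `i+t` (or `m-1` as default) -/
def nf (p m t : ℕ) (π : ℕ → ℕ) (i : ℕ) : ℕ :=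
  Nat.find (⟨m - 1, Or.inr rfl⟩ :
    ∃ β, (β < m - 1 ∧ dg p i (π β) ≠ dg p (i + t) (π β)) ∨ β = m - 1)

lemma nf_le_of_wit {m t : ℕ} {π : ℕ → ℕ} {i β : ℕ} (hβm : β < m - 1)
    (hne : dg p i (π β) ≠ dg p (i + t) (π β)) : nf p m t π i ≤ β := by
  unfold nf; exact Nat.find_le (Or.inl ⟨hβm, hne⟩)

lemma nf_spec_ne {m t : ℕ} {π : ℕ → ℕ} {i : ℕ} (h : nf p m t π i < m - 1) :
    dg p i (π (nf p m t π i)) ≠ dg p (i + t) (π (nf p m t π i)) := by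
  unfold nf at h ⊢
  rcases Nat.find_spec (⟨m - 1, Or.inr rfl⟩ :
      ∃ β, (β < m - 1 ∧ dg p i (π β) ≠ dg p (i + t) (π β)) ∨ β = m - 1) with ⟨_, h2⟩ | h1
  · exact h2
  · omega

lemma nf_min' {m t : ℕ} {π : ℕ → ℕ} {i β : ℕ} (hβ : β < nf p m t π i)
    (hβm : β < m - 1) : dg p i (π β) = dg p (i + t) (π β) := by
  unfold nf at hβ
  have h := Nat.find_min _ hβ
  push_neg at h
  exact h.1 hβm

lemma nf_congr {m t : ℕ} {π : ℕ → ℕ} {i i' : ℕ}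
    (h : ∀ β, β < m - 1 →
      (dg p i' (π β) ≠ dg p (i' + t) (π β) ↔ dg p i (π β) ≠ dg p (i + t) (π β))) :
    nf p m t π i' = nf p m t π i := by
  have hiff : ∀ β, ((β < m - 1 ∧ dg p i' (π β) ≠ dg p (i'+t) (π β)) ∨ β = m-1)
      ↔ ((β < m - 1 ∧ dg p i (π β) ≠ dg p (i+t) (π β)) ∨ β = m-1) := by
    intro β
    constructor
    · rintro (⟨h1, h2⟩ | h1)
      · exact Or.inl ⟨h1, (h β h1).mp h2⟩
      · exact Or.inr h1
    · rintro (⟨h1, h2⟩ | h1)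
      · exact Or.inl ⟨h1, (h β h1).mpr h2⟩
      · exact Or.inr h1
  have H' : ∃ β, (β < m - 1 ∧ dg p i' (π β) ≠ dg p (i' + t) (π β)) ∨ β = m - 1 :=
    ⟨m - 1, Or.inr rfl⟩
  have H : ∃ β, (β < m - 1 ∧ dg p i (π β) ≠ dg p (i + t) (π β)) ∨ β = m - 1 :=
    ⟨m - 1, Or.inr rfl⟩
  unfold nf
  exact le_antisymm (Nat.find_le ((hiff _).mpr (Nat.find_spec H)))
    (Nat.find_le ((hiff _).mp (Nat.find_spec H')))

lemma app1 {m : ℕ} {π : ℕ → ℕ} {c : ℕ → ZMod p} {c0 : ZMod p}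
    (hp : p.Prime) (hm : 2 ≤ m)
    (hπ : Set.BijOn π (Set.Iio (m-1)) (Set.Iio (m-1)))
    (s1 t1 s2 t2 : Fin p) {t : ℕ} (ht0 : 0 < t) (htN : t < p ^ (m-1)) :
    ∑ i ∈ (Finset.range (p^m - t)).filter
        (fun i => dg p i (π 0) = dg p (i + t) (π 0)),
      ch p (Bf p m π c c0 s1 t1 i - Bf p m π c c0 s2 t2 (i + t)) = 0 := by
  have hppos : 0 < p := hp.pos
  have hNpos : 0 < p ^ (m-1) := Nat.pow_pos (n := _) hppos
  have hNm : p ^ (m-1) ≤ p ^ m := Nat.pow_le_pow_right hppos (by omega)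
  have hinj := hπ.injOn
  have hmaps := hπ.mapsTo
  set T := (Finset.range (p^m - t)).filter
      (fun i => dg p i (π 0) = dg p (i + t) (π 0)) with hT
  have hex : ∀ i ∈ T, ∃ β, β < m - 1 ∧ dg p i (π β) ≠ dg p (i + t) (π β) := by
    intro i hi
    by_contra hcon
    push_neg at hcon
    have hall : ∀ q, q < m - 1 → dg p i q = dg p (i+t) q := by
      intro q hq
      obtain ⟨β, hβ, hπβ⟩ := hπ.surjOn (Set.mem_Iio.mpr hq)
      rw [← hπβ]
      exact hcon β (Set.mem_Iio.mp hβ)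
    have hmod : i % p ^ (m-1) = (i+t) % p ^ (m-1) := by
      apply dg_ext hppos (m-1) _ _ (Nat.mod_lt _ hNpos) (Nat.mod_lt _ hNpos)
      intro q hq
      rw [dg_mod_pow hppos hq, dg_mod_pow hppos hq]
      exact hall q hq
    have h1 : (i + t) % p^(m-1) = (i % p^(m-1) + t) % p^(m-1) := by
      conv_lhs => rw [Nat.add_mod, Nat.mod_eq_of_lt htN]
    have hx : i % p^(m-1) < p^(m-1) := Nat.mod_lt _ hNpos
    rw [h1] at hmod
    rcases Nat.lt_or_ge (i % p^(m-1) + t) (p^(m-1)) with hlt | hge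
    · rw [Nat.mod_eq_of_lt hlt] at hmod
      omega
    · rw [Nat.mod_eq_sub_mod hge,
        Nat.mod_eq_of_lt (by omega : i % p^(m-1) + t - p^(m-1) < p^(m-1))] at hmod
      omega
  -- key properties for each i ∈ T and d < p
  have key : ∀ i ∈ T, ∀ d, d < p →
      (sg p (π (nf p m t π i - 1)) d i ∈ T) ∧
      (nf p m t π (sg p (π (nf p m t π i - 1)) d i) = nf p m t π i) ∧
      ((Bf p m π c c0 s1 t1 (sg p (π (nf p m t π i - 1)) d i)
        - Bf p m π c c0 s2 t2 (sg p (π (nf p m t π i - 1)) d i + t))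
       = (Bf p m π c c0 s1 t1 i - Bf p m π c c0 s2 t2 (i + t))
         + ((d : ZMod p) - (dg p i (π (nf p m t π i - 1)) : ZMod p))
           * ((dg p i (π (nf p m t π i)) : ZMod p)
              - (dg p (i+t) (π (nf p m t π i)) : ZMod p))) := by
    intro i hi d hd
    obtain ⟨hrange, hc⟩ := Finset.mem_filter.mp hi
    have hrange' : i < p^m - t := Finset.mem_range.mp hrange
    obtain ⟨βw, hβw, hnew⟩ := hex i hi
    set n := nf p m t π i with hn
    have hnlt : n < m - 1 := lt_of_le_of_lt (nf_le_of_wit (m := m) (t := t) hβw hnew) hβw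
    have hnne : dg p i (π n) ≠ dg p (i+t) (π n) := nf_spec_ne (m := m) (t := t) hnlt
    have hn1 : 1 ≤ n := by
      by_contra hn0
      have : n = 0 := by omega
      rw [this] at hnne
      exact hnne hc
    have hb : (n - 1) + 1 < m - 1 := by omega
    have hκlt : π (n-1) < m - 1 := Set.mem_Iio.mp (hmaps (Set.mem_Iio.mpr (by omega)))
    have ha : dg p i (π (n-1)) = dg p (i+t) (π (n-1)) := nf_min' (m := m) (t := t) (by omega) (by omega)
    have hadd : sg p (π (n-1)) d i + t = sg p (π (n-1)) d (i+t) := by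
      have e1 := sg_add hppos (π (n-1)) d i
      have e2 := sg_add hppos (π (n-1)) d (i+t)
      rw [← ha] at e2
      omega
    have hjlt : i + t < p^m := by omega
    have hslt : sg p (π (n-1)) d (i+t) < p^m := sg_lt hppos hd (by omega) hjlt
    have hmem1 : sg p (π (n-1)) d i < p^m - t := by omega
    have hconstr : dg p (sg p (π (n-1)) d i) (π 0)
        = dg p (sg p (π (n-1)) d i + t) (π 0) := by
      rw [hadd]
      by_cases hc0 : π 0 = π (n-1)
      · rw [hc0, dg_sg_self hppos hd, dg_sg_self hppos hd]
      · rw [dg_sg_ne hppos hd hc0, dg_sg_ne hppos hd hc0]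
        exact hc
    refine ⟨Finset.mem_filter.mpr ⟨Finset.mem_range.mpr hmem1, hconstr⟩, ?_, ?_⟩
    · apply nf_congr
      intro β hβm
      rw [hadd]
      by_cases hβκ : π β = π (n-1)
      · have hββ : β = n - 1 := hinj (Set.mem_Iio.mpr hβm) (Set.mem_Iio.mpr (by omega)) hβκ
        rw [hβκ, dg_sg_self hppos hd, dg_sg_self hppos hd]
        subst hββ
        simp [ha]
      · rw [dg_sg_ne hppos hd hβκ, dg_sg_ne hppos hd hβκ]
    · rw [hadd, Bf_sg hppos hm hinj hmaps hb hd s1 t1 i,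
        Bf_sg hppos hm hinj hmaps hb hd s2 t2 (i+t)]
      have hnn : n - 1 + 1 = n := by omega
      rw [hnn]
      have haZ : (dg p i (π (n-1)) : ZMod p) = (dg p (i+t) (π (n-1)) : ZMod p) := by rw [ha]
      have hif : (if n - 1 = 0 then (0:ZMod p) else (dg p i (π (n-1-1)) : ZMod p))
          = (if n - 1 = 0 then (0:ZMod p) else (dg p (i+t) (π (n-1-1)) : ZMod p)) := by
        by_cases h0 : n - 1 = 0
        · rw [if_pos h0, if_pos h0]
        · have hm2 : dg p i (π (n-1-1)) = dg p (i+t) (π (n-1-1)) :=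
            nf_min' (m := m) (t := t) (by omega) (by omega)
          rw [if_neg h0, if_neg h0, hm2]
      rw [haZ, hif]
      ring
  apply core hp T (fun i => π (nf p m t π i - 1))
    (fun i => Bf p m π c c0 s1 t1 i - Bf p m π c c0 s2 t2 (i + t))
    (fun i => (dg p i (π (nf p m t π i)) : ZMod p)
      - (dg p (i+t) (π (nf p m t π i)) : ZMod p))
  · intro i hi d hd
    exact (key i hi d hd).1
  · intro i hi d hd
    exact congrArg (fun x => π (x - 1)) ((key i hi d hd).2.1)
  · intro i hi d hd
    exact (key i hi d hd).2.2
  · intro i hi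
    obtain ⟨βw, hβw, hnew⟩ := hex i hi
    have hnlt : nf p m t π i < m - 1 :=
      lt_of_le_of_lt (nf_le_of_wit (m := m) (t := t) hβw hnew) hβw
    have hnne := nf_spec_ne (m := m) (t := t) hnlt
    intro hE0
    apply hnne
    have h1 : ((dg p i (π (nf p m t π i)) : ℕ) : ZMod p)
        = ((dg p (i+t) (π (nf p m t π i)) : ℕ) : ZMod p) := by
      rwa [sub_eq_zero] at hE0
    have h2 := congrArg ZMod.val h1
    rwa [ZMod.val_natCast_of_lt (dg_lt hppos _ _),
      ZMod.val_natCast_of_lt (dg_lt hppos _ _)] at h2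

lemma fin_cast_ne {a b : Fin p} (h : a ≠ b) :
    ((a : ℕ) : ZMod p) ≠ ((b : ℕ) : ZMod p) := by
  intro hc
  apply h
  have := congrArg ZMod.val hc
  rw [ZMod.val_natCast_of_lt a.isLt, ZMod.val_natCast_of_lt b.isLt] at this
  exact Fin.ext this

lemma app2 {m : ℕ} {π : ℕ → ℕ} {c : ℕ → ZMod p} {c0 : ZMod p}
    (hp : p.Prime) (hm : 2 ≤ m)
    (hπ : Set.BijOn π (Set.Iio (m-1)) (Set.Iio (m-1)))
    (s1 t1 s2 t2 : Fin p) (hne : ¬(s1 = s2 ∧ t1 = t2)) :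
    ∑ i ∈ Finset.range (p^m),
      ch p (Bf p m π c c0 s1 t1 i - Bf p m π c c0 s2 t2 i) = 0 := by
  have hppos : 0 < p := hp.pos
  have hpm : p ^ (m-1) * p = p ^ m := by
    rw [← pow_succ]
    congr 1
    omega
  have hpm' : p * p ^ (m-1) = p ^ m := by
    rw [mul_comm]
    exact hpm
  have hF : ∀ i, Bf p m π c c0 s1 t1 i - Bf p m π c c0 s2 t2 i
      = (dg p i (π (m-2)) : ZMod p) * (((t1:ℕ) : ZMod p) - ((t2:ℕ) : ZMod p))
        + ((i / p ^ (m-1) : ℕ) : ZMod p) * (((s1:ℕ) : ZMod p) - ((s2:ℕ) : ZMod p)) := by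
    intro i
    unfold Bf
    ring
  by_cases ht : t1 = t2
  · -- then s1 ≠ s2, vary top digit
    have hs : s1 ≠ s2 := fun hs => hne ⟨hs, ht⟩
    subst ht
    apply core hp (Finset.range (p^m)) (fun _ => m - 1)
      (fun i => Bf p m π c c0 s1 t1 i - Bf p m π c c0 s2 t1 i)
      (fun _ => ((s1:ℕ) : ZMod p) - ((s2:ℕ) : ZMod p))
    · intro i hi d hd
      exact Finset.mem_range.mpr (sg_lt hppos hd (by omega) (Finset.mem_range.mp hi))
    · intro i hi d hd; rfl
    · intro i hi d hd
      have hilt := Finset.mem_range.mp hi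
      have hslt : sg p (m-1) d i < p ^ m := sg_lt hppos hd (by omega) hilt
      have hdiv : ∀ x : ℕ, x < p ^ m → dg p x (m-1) = x / p ^ (m-1) := by
        intro x hx
        unfold dg
        apply Nat.mod_eq_of_lt
        rw [Nat.div_lt_iff_lt_mul (Nat.pow_pos (n := _) hppos), hpm']
        exact hx
      have h1 : dg p (sg p (m-1) d i) (m-1) = d := dg_sg_self hppos hd _ _
      have h2 : dg p (sg p (m-1) d i) (π (m-2)) = dg p i (π (m-2)) := by
        apply dg_sg_ne hppos hd
        have : π (m-2) < m - 1 := Set.mem_Iio.mp (hπ.mapsTo (Set.mem_Iio.mpr (by omega)))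
        omega
      rw [hF, hF, h2, ← hdiv _ hslt, h1, ← hdiv _ hilt]
      ring
    · intro i hi
      exact sub_ne_zero.mpr (fin_cast_ne hs)
  · -- t1 ≠ t2, vary digit π (m-2)
    apply core hp (Finset.range (p^m)) (fun _ => π (m - 2))
      (fun i => Bf p m π c c0 s1 t1 i - Bf p m π c c0 s2 t2 i)
      (fun _ => ((t1:ℕ) : ZMod p) - ((t2:ℕ) : ZMod p))
    all_goals
      have hκ : π (m-2) < m - 1 := Set.mem_Iio.mp (hπ.mapsTo (Set.mem_Iio.mpr (by omega)))
    · intro i hi d hd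
      exact Finset.mem_range.mpr (sg_lt hppos hd (by omega) (Finset.mem_range.mp hi))
    · intro i hi d hd; rfl
    · intro i hi d hd
      have h1 : dg p (sg p (π (m-2)) d i) (π (m-2)) = d := dg_sg_self hppos hd _ _
      have h2 : sg p (π (m-2)) d i / p ^ (m-1) = i / p ^ (m-1) :=
        sg_div_ge hppos hd (by omega) i
      rw [hF, hF, h1, h2]
      ring
    · intro i hi
      exact sub_ne_zero.mpr (fin_cast_ne ht)

lemma seqP_eq_ch (g : ℕ → ZMod p) (j : ℕ) : seqP p g j = ch p (g j) := by
  unfold seqP ch zt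
  rw [← Complex.exp_nat_mul]
  congr 1
  ring

lemma gsum (hp : p.Prime) (C X : ZMod p) :
    ∑ γ : Fin p, ch p (C + X * ((γ : ℕ) : ZMod p))
      = if X = 0 then (p : ℂ) * ch p C else 0 := by
  haveI : NeZero p := ⟨hp.ne_zero⟩
  have h1 : ∑ γ : Fin p, ch p (C + X * ((γ : ℕ) : ZMod p))
      = ∑ d ∈ Finset.range p, ch p (C + X * ((d : ℕ) : ZMod p)) :=
    Fin.sum_univ_eq_sum_range (fun d => ch p (C + X * ((d : ℕ) : ZMod p))) p
  rw [h1, sum_range_zmod hp (fun x => ch p (C + X * x))]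
  by_cases hX : X = 0
  · subst hX
    rw [if_pos rfl]
    simp only [zero_mul, add_zero]
    rw [Finset.sum_const, Finset.card_univ, ZMod.card, nsmul_eq_mul]
  · rw [if_neg hX]
    rw [Finset.sum_congr rfl (fun x _ => by rw [show C + X * x = x * X + C from by ring])]
    exact sum_ch_affine hp hX C

lemma accf_neg (L : ℕ) (a b : ℕ → ℂ) {τ : ℤ} (hτ : τ < 0) :
    accf L a b τ = (starRingEnd ℂ) (accf L b a (-τ)) := by
  unfold accf
  by_cases h : -(L:ℤ) < τ
  · rw [if_neg (by omega), if_pos (by omega : -(L:ℤ) < τ ∧ τ ≤ -1),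
      if_pos (by omega : (0:ℤ) ≤ -τ ∧ -τ < (L:ℤ)), map_sum]
    apply Finset.sum_congr rfl
    intro i _
    rw [map_mul, Complex.conj_conj]
    ring
  · rw [if_neg (by omega), if_neg (by omega), if_neg (by omega), if_neg (by omega), map_zero]

lemma pos_case {m : ℕ} {π : ℕ → ℕ} {c : ℕ → ZMod p} {c0 : ZMod p}
    (hp : p.Prime) (hm : 2 ≤ m)
    (hπ : Set.BijOn π (Set.Iio (m-1)) (Set.Iio (m-1)))
    (s1 t1 s2 t2 : Fin p) {t : ℕ} (htN : t < p ^ (m-1))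
    (hcond : 0 < t ∨ ¬(s1 = s2 ∧ t1 = t2)) :
    ∑ γ : Fin p, accf (p^m) (seqP p (aP p m π c c0 s1 t1 γ))
      (seqP p (aP p m π c c0 s2 t2 γ)) (t : ℤ) = 0 := by
  haveI : NeZero p := ⟨hp.ne_zero⟩
  have hppos : 0 < p := hp.pos
  have hNm : p ^ (m-1) ≤ p ^ m := Nat.pow_le_pow_right hppos (by omega)
  have hacc : ∀ γ : Fin p, accf (p^m) (seqP p (aP p m π c c0 s1 t1 γ))
      (seqP p (aP p m π c c0 s2 t2 γ)) (t : ℤ)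
      = ∑ i ∈ Finset.range (p^m - t),
          ch p ((Bf p m π c c0 s1 t1 i - Bf p m π c c0 s2 t2 (i+t))
            + ((dg p i (π 0) : ZMod p) - (dg p (i+t) (π 0) : ZMod p)) * ((γ:ℕ) : ZMod p)) := by
    intro γ
    unfold accf
    rw [if_pos ⟨by omega, by exact_mod_cast lt_of_lt_of_le htN hNm⟩, Int.toNat_natCast]
    apply Finset.sum_congr rfl
    intro i _
    rw [seqP_eq_ch, seqP_eq_ch, conj_ch hp, ← ch_add hp]
    congr 1
    rw [aP_eq hppos hm hπ.mapsTo, aP_eq hppos hm hπ.mapsTo]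
    ring
  rw [Finset.sum_congr rfl (fun γ _ => hacc γ), Finset.sum_comm]
  have h2 : ∀ i ∈ Finset.range (p^m - t),
      (∑ γ : Fin p, ch p ((Bf p m π c c0 s1 t1 i - Bf p m π c c0 s2 t2 (i+t))
        + ((dg p i (π 0) : ZMod p) - (dg p (i+t) (π 0) : ZMod p)) * ((γ:ℕ) : ZMod p)))
      = if dg p i (π 0) = dg p (i+t) (π 0)
          then (p:ℂ) * ch p (Bf p m π c c0 s1 t1 i - Bf p m π c c0 s2 t2 (i+t)) else 0 := by
    intro i _
    rw [gsum hp]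
    congr 1
    · -- condition equivalence
      have : (((dg p i (π 0) : ZMod p) - (dg p (i+t) (π 0) : ZMod p)) = 0)
          = (dg p i (π 0) = dg p (i+t) (π 0)) := by
        apply propext
        constructor
        · intro h
          have h1 := sub_eq_zero.mp h
          have h2 := congrArg ZMod.val h1
          rwa [ZMod.val_natCast_of_lt (dg_lt hppos _ _),
            ZMod.val_natCast_of_lt (dg_lt hppos _ _)] at h2
        · intro h
          rw [h, sub_self]
      rw [this]
  rw [Finset.sum_congr rfl h2, Finset.sum_ite, Finset.sum_const_zero, add_zero,
    ← Finset.mul_sum]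
  rcases Nat.eq_zero_or_pos t with ht0 | ht0
  · subst ht0
    have hne : ¬(s1 = s2 ∧ t1 = t2) := by
      rcases hcond with h | h
      · omega
      · exact h
    have hfin : ∑ i ∈ (Finset.range (p^m - 0)).filter
        (fun i => dg p i (π 0) = dg p (i+0) (π 0)),
        ch p (Bf p m π c c0 s1 t1 i - Bf p m π c c0 s2 t2 (i+0)) = 0 := by
      simp only [Nat.add_zero, Nat.sub_zero]
      simp only [eq_self_iff_true, Finset.filter_true]
      exact app2 hp hm hπ s1 t1 s2 t2 hne
    rw [hfin, mul_zero]
  · rw [app1 hp hm hπ s1 t1 s2 t2 ht0 htN, mul_zero]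

/-- for `p` prime, `m ≥ 2`, `λ = p`, the `p^2` codes `C_{s,t}`
(`s,t ∈ Z_p`), each a `p × p^m` matrix with rows `ψ(a_{s,t}^γ)`, form a
`(p^2, p^{m−1})`-ZCCS with `p` sequences per code of length `p^m`; in particular the
summed cross-correlation vanishes for `s1 ≠ s2`, `t1 = t2` and all `|τ| < p^{m−1}`. -/
theorem zccs_prime_case (p m : ℕ) (hp : p.Prime) (hm : 2 ≤ m)
    (π : ℕ → ℕ) (hπ : Set.BijOn π (Set.Iio (m - 1)) (Set.Iio (m - 1)))
    (c : ℕ → ZMod p) (c0 : ZMod p)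
    (s1 t1 s2 t2 : Fin p) (τ : ℤ) :
    (s1 = s2 ∧ t1 = t2 ∧ τ = 0 →
      ∑ γ : Fin p, accf (p ^ m) (seqP p (aP p m π c c0 s1 t1 γ))
          (seqP p (aP p m π c c0 s2 t2 γ)) τ = ((p ^ (m + 1) : ℕ) : ℂ)) ∧
    (s1 = s2 ∧ t1 = t2 ∧ 0 < |τ| ∧ |τ| < ((p ^ (m - 1) : ℕ) : ℤ) →
      ∑ γ : Fin p, accf (p ^ m) (seqP p (aP p m π c c0 s1 t1 γ))
          (seqP p (aP p m π c c0 s2 t2 γ)) τ = 0) ∧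
    (¬(s1 = s2 ∧ t1 = t2) ∧ |τ| < ((p ^ (m - 1) : ℕ) : ℤ) →
      ∑ γ : Fin p, accf (p ^ m) (seqP p (aP p m π c c0 s1 t1 γ))
          (seqP p (aP p m π c c0 s2 t2 γ)) τ = 0) := by
  haveI : NeZero p := ⟨hp.ne_zero⟩
  have hppos : 0 < p := hp.pos
  have hNpos : 0 < p ^ (m-1) := Nat.pow_pos (n := _) hppos
  have hLpos : 0 < p ^ m := Nat.pow_pos (n := _) hppos
  refine ⟨?_, ?_, ?_⟩
  · rintro ⟨hs, ht, hτ⟩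
    subst hs; subst ht; subst hτ
    have hone : ∀ γ : Fin p, accf (p^m) (seqP p (aP p m π c c0 s1 t1 γ))
        (seqP p (aP p m π c c0 s1 t1 γ)) 0 = ((p^m : ℕ) : ℂ) := by
      intro γ
      unfold accf
      rw [if_pos ⟨le_refl (0:ℤ), by exact_mod_cast hLpos⟩]
      have h0 : (0:ℤ).toNat = 0 := rfl
      rw [h0, Nat.sub_zero]
      have hterm : ∀ i ∈ Finset.range (p^m),
          seqP p (aP p m π c c0 s1 t1 γ) i
            * (starRingEnd ℂ) (seqP p (aP p m π c c0 s1 t1 γ) (i + 0)) = 1 := by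
        intro i _
        rw [Nat.add_zero, seqP_eq_ch, conj_ch hp, ch_mul_neg hp]
      rw [Finset.sum_congr rfl hterm, Finset.sum_const, Finset.card_range,
        nsmul_eq_mul, mul_one]
    rw [Finset.sum_congr rfl (fun γ _ => hone γ), Finset.sum_const, Finset.card_univ,
      Fintype.card_fin, nsmul_eq_mul]
    push_cast
    ring
  · rintro ⟨hs, ht, hτ0, hτN⟩
    subst hs; subst ht
    rcases lt_trichotomy τ 0 with hneg | hzero | hpos
    · have h1 : ∀ γ : Fin p, accf (p^m) (seqP p (aP p m π c c0 s1 t1 γ))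
          (seqP p (aP p m π c c0 s1 t1 γ)) τ
          = (starRingEnd ℂ) (accf (p^m) (seqP p (aP p m π c c0 s1 t1 γ))
              (seqP p (aP p m π c c0 s1 t1 γ)) (-τ)) :=
        fun γ => accf_neg _ _ _ hneg
      rw [Finset.sum_congr rfl (fun γ _ => h1 γ), ← map_sum]
      rw [show -τ = (((-τ).toNat : ℕ) : ℤ) from by omega]
      rw [pos_case hp hm hπ s1 t1 s1 t1
        (by rw [abs_of_neg hneg] at hτN; omega) (Or.inl (by omega)), map_zero]
    · subst hzero; simp at hτ0
    · rw [show τ = ((τ.toNat : ℕ) : ℤ) from by omega]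
      exact pos_case hp hm hπ s1 t1 s1 t1
        (by rw [abs_of_pos hpos] at hτN; omega) (Or.inl (by omega))
  · rintro ⟨hne, hτN⟩
    have hne' : ¬(s2 = s1 ∧ t2 = t1) := fun ⟨h1, h2⟩ => hne ⟨h1.symm, h2.symm⟩
    rcases lt_trichotomy τ 0 with hneg | hzero | hpos
    · have h1 : ∀ γ : Fin p, accf (p^m) (seqP p (aP p m π c c0 s1 t1 γ))
          (seqP p (aP p m π c c0 s2 t2 γ)) τ
          = (starRingEnd ℂ) (accf (p^m) (seqP p (aP p m π c c0 s2 t2 γ))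
              (seqP p (aP p m π c c0 s1 t1 γ)) (-τ)) :=
        fun γ => accf_neg _ _ _ hneg
      rw [Finset.sum_congr rfl (fun γ _ => h1 γ), ← map_sum]
      rw [show -τ = (((-τ).toNat : ℕ) : ℤ) from by omega]
      rw [pos_case hp hm hπ s2 t2 s1 t1
        (by rw [abs_of_neg hneg] at hτN; omega) (Or.inr hne'), map_zero]
    · subst hzero
      rw [show (0:ℤ) = (((0:ℕ) : ℕ) : ℤ) from rfl]
      exact pos_case hp hm hπ s1 t1 s2 t2 (by omega) (Or.inr hne)
    · rw [show τ = ((τ.toNat : ℕ) : ℤ) from by omega]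
      exact pos_case hp hm hπ s1 t1 s2 t2
        (by rw [abs_of_pos hpos] at hτN; omega) (Or.inr hne)
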